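/- arXiv:2301.10529 — 2 statements merged into one kernel-verified Lean document; each statement's English description precedes it below -/
import Mathlib

section
/- Let p₁, …, p_n be distinct primes and μ = p₁⋯p_n. For each i, let γ_i be the inverse of μ/p_i modulo p_i. Then for every divisor M of μ with p_i ∣ M, and letting c_i be the inverse of M/p_i modulo p_i, we have (μ·γ_i)/p_i ≡ (M·c_i)/p_i (mod M). -/
open Finset in
/-- Let `p₁,…,p_n` be distinct primes with product `μ`, and `γ_i` an inverse of
`μ/p_i` modulo `p_i`.  Then for every divisor `M` of `μ` with `p_i ∣ M`, and
`c_i` an inverse of `M/p_i` modulo `p_i`, one has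
`(μ·γ_i)/p_i ≡ (M·c_i)/p_i (mod M)`, i.e. `(μ/p_i)·γ_i ≡ (M/p_i)·c_i (mod M)`. -/
theorem stmt_6 (n : ℕ) (p : Fin n → ℕ) (hp : ∀ i, (p i).Prime)
    (hinj : Function.Injective p)
    (μ : ℕ) (hμ : μ = ∏ i, p i)
    (i : Fin n) (γ : ℤ) (hγ : ((μ / p i : ℕ) : ℤ) * γ ≡ 1 [ZMOD (p i : ℤ)])
    (M : ℕ) (hMμ : M ∣ μ) (hpM : p i ∣ M)
    (c : ℤ) (hc : ((M / p i : ℕ) : ℤ) * c ≡ 1 [ZMOD (p i : ℤ)]) :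
    ((μ / p i : ℕ) : ℤ) * γ ≡ ((M / p i : ℕ) : ℤ) * c [ZMOD (M : ℤ)] := by
  -- μ / p i = product over erase
  have hpμ : p i ∣ μ := hpM.trans hMμ
  have hμ' : μ / p i = ∏ j ∈ univ.erase i, p j := by
    have h1 : μ = p i * ∏ j ∈ univ.erase i, p j := by
      rw [hμ, mul_prod_erase univ p (mem_univ i)]
    rw [h1, Nat.mul_div_cancel_left _ (hp i).pos]
  have hcop : Nat.Coprime (p i) (μ / p i) := by
    rw [hμ']
    apply Nat.Coprime.prod_right
    intro j hj
    exact ((hp i).coprime_iff_not_dvd).2 (by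
      intro hdvd
      have := ((Nat.prime_dvd_prime_iff_eq (hp i) (hp j)).1 hdvd)
      exact (mem_erase.1 hj).1 (hinj this).symm)
  obtain ⟨k, hk⟩ := hMμ
  obtain ⟨M', hM'⟩ := hpM
  have hM'eq : M / p i = M' := by rw [hM', Nat.mul_div_cancel_left _ (hp i).pos]
  have hμdiv : μ / p i = M' * k := by
    rw [hk, hM', mul_assoc, Nat.mul_div_cancel_left _ (hp i).pos]
  have hcopM' : Nat.Coprime (p i) M' := by
    apply Nat.Coprime.coprime_dvd_right _ hcop
    exact ⟨k, hμdiv⟩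
  -- congruence mod p i
  have h1 : ((μ / p i : ℕ) : ℤ) * γ ≡ ((M / p i : ℕ) : ℤ) * c [ZMOD ((p i : ℕ) : ℤ)] :=
    hγ.trans hc.symm
  -- congruence mod M'
  have h2 : ((μ / p i : ℕ) : ℤ) * γ ≡ ((M / p i : ℕ) : ℤ) * c [ZMOD ((M' : ℕ) : ℤ)] := by
    have ha : (M' : ℤ) ∣ ((μ / p i : ℕ) : ℤ) * γ := by
      rw [hμdiv]; push_cast; exact ⟨k * γ, by ring⟩
    have hb : (M' : ℤ) ∣ ((M / p i : ℕ) : ℤ) * c := by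
      rw [hM'eq]; exact ⟨c, rfl⟩
    exact (Int.modEq_zero_iff_dvd.2 ha).trans (Int.modEq_zero_iff_dvd.2 hb).symm
  have := (Int.modEq_and_modEq_iff_modEq_mul (by
      simpa [Int.isCoprime_iff_gcd_eq_one, Int.gcd_natCast_natCast] using hcopM') ).1 ⟨h1, h2⟩
  have hMc : ((M : ℕ) : ℤ) = ((p i : ℕ) : ℤ) * ((M' : ℕ) : ℤ) := by
    rw [hM']; push_cast; ring
  rw [hMc]; exact this
end

section
/- If x is a positive integer and z is the product of all primes in a finite set F, and y ≡ z^(2^e) (mod x) with 2^(2^e) ≥ x, then x is F-smooth (every prime factor of x lies in F) if and only if x = gcd(x, y), i.e., x / gcd(x, y) = 1. -/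
open Finset in
/-- If `z` is the product of all primes in a finite set `F`, `x > 0`,
`2^(2^e) ≥ x`, and `y = z^(2^e) mod x`, then `x` is `F`-smooth (every prime
factor of `x` lies in `F`) if and only if `gcd(x, y) = x`. -/
theorem stmt_16 (F : Finset ℕ) (hF : ∀ p ∈ F, p.Prime)
    (z : ℕ) (hz : z = ∏ p ∈ F, p)
    (x : ℕ) (hx : 0 < x) (e : ℕ) (he : x ≤ 2 ^ (2 ^ e))
    (y : ℕ) (hy : y = z ^ (2 ^ e) % x) :
    (∀ p : ℕ, p.Prime → p ∣ x → p ∈ F) ↔ Nat.gcd x y = x := by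
  have hz0 : z ≠ 0 := by
    subst hz
    exact Finset.prod_ne_zero_iff.mpr fun p hp => (hF p hp).pos.ne'
  have key : (∀ p : ℕ, p.Prime → p ∣ x → p ∈ F) ↔ x ∣ z ^ 2 ^ e := by
    constructor
    · intro h
      rw [← Nat.factorization_le_iff_dvd hx.ne' (pow_ne_zero _ hz0)]
      intro p
      by_cases hp : p.Prime
      · by_cases hpx : p ∣ x
        · have hpF := h p hp hpx
          have h1 : z.factorization p = 1 := by
            subst hz
            rw [Nat.factorization_prod fun q hq => (hF q hq).pos.ne']
            rw [Finset.sum_apply']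
            rw [Finset.sum_eq_single p]
            · simp [hp.factorization]
            · intro q hq hqp
              rw [(hF q hq).factorization, Finsupp.single_apply, if_neg hqp]
            · intro hpF'; exact absurd hpF hpF'
          rw [Nat.factorization_pow, Finsupp.smul_apply, h1, smul_eq_mul, mul_one]
          have hdvd : p ^ x.factorization p ∣ x := Nat.ordProj_dvd x p
          have hle : p ^ x.factorization p ≤ x := Nat.le_of_dvd hx hdvd
          have h2 : 2 ^ x.factorization p ≤ 2 ^ 2 ^ e :=
            le_trans (Nat.pow_le_pow_left hp.two_le _) (le_trans hle he)
          exact (Nat.pow_le_pow_iff_right one_lt_two).mp h2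
        · simp [Nat.factorization_eq_zero_of_not_dvd hpx]
      · simp [Nat.factorization_eq_zero_of_not_prime _ hp]
    · intro h p hp hpx
      have hpz : p ∣ z := hp.dvd_of_dvd_pow (hpx.trans h)
      subst hz
      obtain ⟨q, hq, hpq⟩ := hp.prime.exists_mem_finset_dvd hpz
      rwa [(Nat.prime_dvd_prime_iff_eq hp (hF q hq)).mp hpq]
  rw [key]
  subst hy
  have hg : Nat.gcd x (z ^ 2 ^ e % x) = Nat.gcd x (z ^ 2 ^ e) := by
    rw [Nat.gcd_rec x (z ^ 2 ^ e), Nat.gcd_comm]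
  rw [hg]
  exact ⟨Nat.gcd_eq_left, fun h => h ▸ Nat.gcd_dvd_right _ _⟩
end
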